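/- arXiv:2401.02895 — 3 statements merged into one kernel-verified Lean document; each statement's English description precedes it below -/
import Mathlib

section
/- Let H be a group with trivial center, let A and B be proper subgroups of H (A ≠ H and B ≠ H), and let φ : A ≅ B be a group isomorphism whose only fixed point is the identity, i.e., if a ∈ A and φ(a) = a as elements of H then a = 1. Then the HNN extension H*_φ = ⟨H, t ∣ t a t⁻¹ = φ(a) for all a ∈ A⟩ has trivial center. -/
open HNNExtension HNNExtension.NormalWord

/-- Let `H` be a group with trivial center, `A` and `B` proper subgroups
of `H`, and `φ : A ≃* B` an isomorphism whose only fixed point (as elements of `H`) is the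
identity. Then the HNN extension `H*_φ = ⟨H, t ∣ t a t⁻¹ = φ(a), a ∈ A⟩` has
trivial center. -/
theorem hnnExtension_center_trivial {H : Type*} [Group H]
    (hZ : Subgroup.center H = ⊥) (A B : Subgroup H) (hA : A ≠ ⊤) (hB : B ≠ ⊤)
    (φ : A ≃* B) (hφ : ∀ a : A, ((φ a : H) = (a : H)) → a = 1) :
    Subgroup.center (HNNExtension H A B φ) = ⊥ := by
  rw [eq_bot_iff]
  intro g hg
  rw [Subgroup.mem_center_iff] at hg
  rw [Subgroup.mem_bot]
  rcases NormalWord.TransversalPair.nonempty H A B with ⟨d⟩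
  set w : NormalWord d := g • NormalWord.empty with hw
  have hprod : w.prod φ = g := by
    rw [hw, NormalWord.prod_smul, NormalWord.prod_empty, mul_one]
  rcases List.eq_nil_or_concat w.toList with hnil | ⟨L, b, hL⟩
  · -- no t letters: g = of w.head
    have hg' : g = of w.head := by
      rw [← hprod]
      show of w.head * _ = _
      rw [hnil]
      simp
    have hc : w.head ∈ Subgroup.center H := by
      rw [Subgroup.mem_center_iff]
      intro x
      apply of_injective (A := A) (B := B) (φ := φ)
      have := hg (of x)
      rw [hg'] at this
      simpa [map_mul] using this
    rw [hZ, Subgroup.mem_bot] at hc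
    rw [hg', hc, map_one]
  · -- the word contains t letters: contradiction
    exfalso
    have hne : w.toList ≠ [] := by rw [hL]; simp [List.concat]
    set u₁ : ℤˣ := (w.toList.head hne).1 with hu₁
    have hCproper : toSubgroup A B (-u₁) ≠ ⊤ := by
      rcases Int.units_eq_one_or u₁ with h1 | h1 <;>
        simp [h1, toSubgroup_one, toSubgroup_neg_one, hA, hB]
    obtain ⟨y, hy⟩ : ∃ y, y ∉ toSubgroup A B (-u₁) := by
      by_contra hcon
      push_neg at hcon
      exact hCproper ((Subgroup.eq_top_iff' _).2 hcon)
    set c : H := w.head with hc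
    set h : H := c * y⁻¹ * c⁻¹ with hh
    -- first reduced word : of h * g
    set w₁ : ReducedWord H A B :=
      { head := h * c, toList := w.toList, chain := w.chain } with hw₁
    -- second reduced word : g * of h
    have chain₂ : (L ++ [(b.1, b.2 * h)]).Chain'
        (fun a b => a.2 ∈ toSubgroup A B a.1 → a.1 = b.1) := by
      have := w.chain
      rw [hL, List.concat_eq_append, List.isChain_append] at this
      rw [List.Chain', List.isChain_append]
      refine ⟨this.1, List.isChain_singleton _, ?_⟩
      intro x hx z hz
      simp only [List.head?_cons, Option.mem_def, Option.some.injEq] at hz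
      subst hz
      exact fun hmem => this.2.2 x hx b (by simp) hmem
    set w₂ : ReducedWord H A B :=
      { head := c, toList := L ++ [(b.1, b.2 * h)], chain := chain₂ } with hw₂
    have hp₁ : w₁.prod φ = of h * g := by
      rw [← hprod]
      show of (h * c) * _ = of h * (of c * _)
      rw [map_mul, mul_assoc]
    have hp₂ : w₂.prod φ = g * of h := by
      rw [← hprod]
      show of c * ((L ++ [(b.1, b.2 * h)]).map _).prod
        = of c * (w.toList.map (fun x => t ^ (x.1 : ℤ) * of x.2)).prod * of h
      rw [hL, List.concat_eq_append]
      simp [List.map_append, List.prod_append, map_mul, mul_assoc]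
    have heq : w₁.prod φ = w₂.prod φ := by
      rw [hp₁, hp₂, hg (of h)]
    obtain ⟨-, h2⟩ := ReducedWord.map_fst_eq_and_of_prod_eq φ heq
    have hu : u₁ ∈ (w₁.toList.head?.map Prod.fst) := by
      show u₁ ∈ (w.toList.head?.map Prod.fst)
      rw [List.head?_eq_head hne]
      simp [hu₁]
    have h2' := h2 u₁ hu
    have : (h * c)⁻¹ * c = y := by
      rw [hh]; group
    rw [hw₁] at h2'
    simp only at h2'
    rw [this] at h2'
    exact hy h2'
end

section
/- Let F be a free group (on an arbitrary set) and let w ∈ F with w ≠ 1. Suppose g₁, …, g_n ∈ F and ε₁, …, ε_n ∈ {+1, −1} satisfy ∏_{j=1}^{n} g_j⁻¹ w^{ε_j} g_j = 1. Then ∑_{j=1}^{n} ε_j = 0. -/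
namespace MagnusProof

noncomputable section
open scoped Classical

/-- The Magnus algebra: formal ℤ-linear combinations (possibly infinite) of words in `X`,
with convolution product. -/
def Mag (X : Type*) : Type _ := List X → ℤ

namespace Mag

variable {X : Type*}

instance : AddCommGroup (Mag X) := Pi.addCommGroup

instance : Mul (Mag X) :=
  ⟨fun f g u => ∑ i ∈ Finset.range (u.length + 1), f (u.take i) * g (u.drop i)⟩

instance : One (Mag X) := ⟨fun u => if u = [] then 1 else 0⟩

private lemma mul_apply' (f g : Mag X) (u : List X) :
    (f * g) u = ∑ i ∈ Finset.range (u.length + 1), f (u.take i) * g (u.drop i) := rfl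

private lemma add_apply' (f g : Mag X) (u : List X) : (f + g) u = f u + g u := rfl
private lemma zero_apply' (u : List X) : (0 : Mag X) u = 0 := rfl
private lemma one_apply' (u : List X) : (1 : Mag X) u = if u = [] then 1 else 0 := rfl

private lemma one_apply_nil' : (1 : Mag X) [] = 1 := rfl
private lemma one_apply_ne' {u : List X} (h : u ≠ []) : (1 : Mag X) u = 0 := by
  rw [one_apply', if_neg h]

private lemma one_mul' (f : Mag X) : 1 * f = f := by
  funext u
  rw [mul_apply', Finset.sum_eq_single 0]
  · rw [List.take_zero, List.drop_zero, one_apply_nil', one_mul]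
  · intro i hi hne
    have h : u.take i ≠ [] := by
      rw [Finset.mem_range] at hi
      rw [← List.length_pos_iff, List.length_take]
      omega
    rw [one_apply_ne' h, zero_mul]
  · simp

private lemma mul_one' (f : Mag X) : f * 1 = f := by
  funext u
  rw [mul_apply', Finset.sum_eq_single u.length]
  · rw [List.take_length, List.drop_length, one_apply_nil', mul_one]
  · intro i hi hne
    have h : u.drop i ≠ [] := by
      rw [Finset.mem_range] at hi
      rw [← List.length_pos_iff, List.length_drop]
      omega
    rw [one_apply_ne' h, mul_zero]
  · simp

private lemma mul_assoc' (f g h : Mag X) : f * g * h = f * (g * h) := by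
  funext u
  rw [mul_apply', mul_apply']
  have hL : ∀ i ∈ Finset.range (u.length + 1),
      (f * g) (u.take i) * h (u.drop i)
        = ∑ j ∈ Finset.range (i + 1), f (u.take j) * (g ((u.take i).drop j) * h (u.drop i)) := by
    intro i hi
    rw [Finset.mem_range] at hi
    rw [mul_apply', Finset.sum_mul, List.length_take, min_eq_left (by omega)]
    refine Finset.sum_congr rfl fun j hj => ?_
    rw [Finset.mem_range] at hj
    rw [List.take_take, min_eq_left (by omega), mul_assoc]
  rw [Finset.sum_congr rfl hL]
  have hR : ∀ j ∈ Finset.range (u.length + 1),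
      f (u.take j) * (g * h) (u.drop j)
        = ∑ t ∈ Finset.range (u.length - j + 1),
            f (u.take j) * (g ((u.drop j).take t) * h ((u.drop j).drop t)) := by
    intro j hj
    rw [mul_apply', Finset.mul_sum, List.length_drop]
  rw [Finset.sum_congr rfl hR]
  rw [Finset.sum_sigma', Finset.sum_sigma']
  refine Finset.sum_nbij' (fun p => ⟨p.2, p.1 - p.2⟩) (fun p => ⟨p.1 + p.2, p.1⟩) ?_ ?_ ?_ ?_ ?_
  · rintro ⟨i, j⟩ hp
    simp only [Finset.mem_sigma, Finset.mem_range] at hp ⊢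
    omega
  · rintro ⟨j, t⟩ hp
    simp only [Finset.mem_sigma, Finset.mem_range] at hp ⊢
    omega
  · rintro ⟨i, j⟩ hp
    simp only [Finset.mem_sigma, Finset.mem_range] at hp
    have h1 : j + (i - j) = i := by omega
    simp [h1]
  · rintro ⟨j, t⟩ hp
    simp only [Finset.mem_sigma, Finset.mem_range] at hp
    have h1 : j + t - j = t := by omega
    simp [h1]
  · rintro ⟨i, j⟩ hp
    simp only [Finset.mem_sigma, Finset.mem_range] at hp
    have h2 : (u.take i).drop j = (u.drop j).take (i - j) := List.drop_take
    have h3 : (u.drop j).drop (i - j) = u.drop i := by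
      rw [List.drop_drop]
      congr 1
      omega
    simp only [h2, h3]

private lemma left_distrib' (f g h : Mag X) : f * (g + h) = f * g + f * h := by
  funext u
  simp [mul_apply', add_apply', mul_add, Finset.sum_add_distrib]

private lemma right_distrib' (f g h : Mag X) : (f + g) * h = f * h + g * h := by
  funext u
  simp [mul_apply', add_apply', add_mul, Finset.sum_add_distrib]

private lemma zero_mul' (f : Mag X) : 0 * f = 0 := by
  funext u; simp [mul_apply', zero_apply']

private lemma mul_zero' (f : Mag X) : f * 0 = 0 := by
  funext u; simp [mul_apply', zero_apply']

instance : Ring (Mag X) where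
  __ := (inferInstance : AddCommGroup (Mag X))
  __ := (inferInstance : Mul (Mag X))
  __ := (inferInstance : One (Mag X))
  mul_assoc := mul_assoc'
  one_mul := one_mul'
  mul_one := mul_one'
  left_distrib := left_distrib'
  right_distrib := right_distrib'
  zero_mul := zero_mul'
  mul_zero := mul_zero'

/- apply lemmas, restated after the ring instance -/

lemma mul_apply (f g : Mag X) (u : List X) :
    (f * g) u = ∑ i ∈ Finset.range (u.length + 1), f (u.take i) * g (u.drop i) := rfl

lemma add_apply (f g : Mag X) (u : List X) : (f + g) u = f u + g u := rfl
lemma sub_apply (f g : Mag X) (u : List X) : (f - g) u = f u - g u := rfl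
lemma neg_apply (f : Mag X) (u : List X) : (-f) u = -(f u) := rfl
lemma zero_apply (u : List X) : (0 : Mag X) u = 0 := rfl
lemma one_apply (u : List X) : (1 : Mag X) u = if u = [] then 1 else 0 := rfl
lemma one_apply_nil : (1 : Mag X) [] = 1 := rfl
lemma one_apply_ne {u : List X} (h : u ≠ []) : (1 : Mag X) u = 0 := by
  rw [one_apply, if_neg h]

/-! ### Generator units `1 + x` and their inverses -/

def delta (x : X) : Mag X := fun u => if u = [x] then 1 else 0

def iota (x : X) : Mag X := fun u => if u = List.replicate u.length x then (-1) ^ u.length else 0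

def gen (x : X) : Mag X := 1 + delta x

lemma delta_apply (x : X) (u : List X) : delta x u = if u = [x] then 1 else 0 := rfl

lemma iota_replicate (x : X) (n : ℕ) : iota x (List.replicate n x) = (-1) ^ n := by
  rw [iota]
  simp

lemma iota_apply_ne {x : X} {u : List X} (h : u ≠ List.replicate u.length x) :
    iota x u = 0 := by
  rw [iota]
  exact if_neg h

lemma iota_nil (x : X) : iota x ([] : List X) = 1 := by
  simpa using iota_replicate x 0

lemma mul_delta_concat (f : Mag X) (x y : X) (u : List X) :
    (f * delta x) (u ++ [y]) = if y = x then f u else 0 := by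
  rw [Mag.mul_apply]
  rw [Finset.sum_eq_single u.length]
  · rw [List.take_append_of_le_length (le_refl _), List.take_length,
      List.drop_append_of_le_length (le_refl _), List.drop_length, List.nil_append]
    simp only [delta_apply]
    by_cases hyx : y = x
    · subst hyx; simp
    · have hne : [y] ≠ [x] := by simpa using hyx
      rw [if_neg hne, mul_zero, if_neg hyx]
  · intro i hi hne
    have hd : (u ++ [y]).drop i ≠ [x] := by
      intro hcontra
      have hlen := congr_arg List.length hcontra
      rw [Finset.mem_range] at hi
      simp only [List.length_drop, List.length_append, List.length_singleton,
        List.length_cons, List.length_nil] at hlen hi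
      omega
    rw [delta_apply, if_neg hd, mul_zero]
  · intro hcon
    simp only [Finset.mem_range, List.length_append, List.length_singleton, not_lt] at hcon
    omega

lemma mul_delta_nil (f : Mag X) (x : X) : (f * delta x) [] = 0 := by
  rw [Mag.mul_apply]
  simp [delta_apply]

lemma delta_mul_cons (f : Mag X) (x y : X) (u : List X) :
    (delta x * f) (y :: u) = if y = x then f u else 0 := by
  rw [Mag.mul_apply]
  rw [Finset.sum_eq_single 1]
  · rw [show (1 : ℕ) = 0 + 1 from rfl, List.take_succ_cons, List.take_zero,
      List.drop_succ_cons, List.drop_zero]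
    simp only [delta_apply]
    by_cases hyx : y = x
    · subst hyx; simp
    · have hne : [y] ≠ [x] := by simpa using hyx
      rw [if_neg hne, zero_mul, if_neg hyx]
  · intro i hi hne
    have hd : (y :: u).take i ≠ [x] := by
      intro hcontra
      have hlen := congr_arg List.length hcontra
      rw [Finset.mem_range] at hi
      simp only [List.length_take, List.length_cons, List.length_singleton,
        List.length_nil] at hlen hi
      rw [Nat.min_def] at hlen
      split_ifs at hlen <;> omega
    rw [delta_apply, if_neg hd, zero_mul]
  · intro hcon
    simp only [Finset.mem_range, List.length_cons, not_lt] at hcon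
    omega

lemma replicate_concat_iff {x y : X} {u : List X} :
    u ++ [y] = List.replicate (u ++ [y]).length x ↔
      (u = List.replicate u.length x ∧ y = x) := by
  constructor
  · intro h
    rw [List.length_append, List.length_singleton, List.replicate_add] at h
    have h2 := List.append_inj h (by simp)
    have h3 : ([y] : List X) = List.replicate 1 x := h2.2
    simp at h3
    exact ⟨h2.1, h3⟩
  · rintro ⟨h1, h2⟩
    subst h2
    rw [List.length_append, List.length_singleton, List.replicate_add]
    rw [show List.replicate 1 y = [y] by simp]
    conv_lhs => rw [h1]

lemma replicate_cons_iff {x y : X} {u : List X} :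
    y :: u = List.replicate (y :: u).length x ↔
      (u = List.replicate u.length x ∧ y = x) := by
  rw [List.length_cons, List.replicate_succ, List.cons_eq_cons]
  tauto

lemma iota_mul_gen (x : X) : iota x * gen x = 1 := by
  have key : iota x * gen x = iota x + iota x * delta x := by
    rw [gen, mul_add, mul_one]
  rw [key]
  funext u
  induction u using List.reverseRecOn with
  | nil =>
    rw [Mag.add_apply, mul_delta_nil, Mag.one_apply_nil, iota_nil]
    ring
  | append_singleton u y _ =>
    rw [Mag.add_apply, mul_delta_concat, Mag.one_apply_ne (by simp)]
    by_cases hyx : y = x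
    · rw [if_pos hyx, hyx]
      by_cases hr : u = List.replicate u.length x
      · have h1 : iota x (u ++ [x]) = (-1) ^ (u.length + 1) := by
          have he : u ++ [x] = List.replicate (u.length + 1) x := by
            rw [List.replicate_add, show List.replicate 1 x = [x] by simp]
            conv_lhs => rw [hr]
          rw [he, iota_replicate]
        have h2 : iota x u = (-1) ^ u.length := by
          conv_lhs => rw [hr]
          rw [iota_replicate]
        rw [h1, h2]
        ring
      · have h1 : iota x (u ++ [x]) = 0 := by
          apply iota_apply_ne
          intro hc
          rw [replicate_concat_iff] at hc
          exact hr hc.1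
        rw [h1, iota_apply_ne hr]
        ring
    · rw [if_neg hyx]
      have h1 : iota x (u ++ [y]) = 0 := by
        apply iota_apply_ne
        intro hc
        rw [replicate_concat_iff] at hc
        exact hyx hc.2
      rw [h1]
      ring

lemma gen_mul_iota (x : X) : gen x * iota x = 1 := by
  have key : gen x * iota x = iota x + delta x * iota x := by
    rw [gen, add_mul, one_mul, add_comm]
  rw [key]
  funext u
  cases u with
  | nil =>
    rw [Mag.add_apply, Mag.mul_apply]
    simp only [List.length_nil, zero_add, Finset.sum_range_one, List.take_nil, List.drop_nil]
    rw [delta_apply, if_neg (by simp), zero_mul, iota_nil, Mag.one_apply_nil]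
    ring
  | cons y v =>
    rw [Mag.add_apply, delta_mul_cons, Mag.one_apply_ne (by simp)]
    by_cases hyx : y = x
    · rw [if_pos hyx, hyx]
      by_cases hr : v = List.replicate v.length x
      · have h1 : iota x (x :: v) = (-1) ^ (v.length + 1) := by
          have he : x :: v = List.replicate (v.length + 1) x := by
            rw [List.replicate_succ, List.cons_eq_cons]
            exact ⟨rfl, hr⟩
          rw [he, iota_replicate]
        have h2 : iota x v = (-1) ^ v.length := by
          conv_lhs => rw [hr]
          rw [iota_replicate]
        rw [h1, h2]
        ring
      · have h1 : iota x (x :: v) = 0 := by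
          apply iota_apply_ne
          intro hc
          rw [replicate_cons_iff] at hc
          exact hr hc.1
        rw [h1, iota_apply_ne hr]
        ring
    · rw [if_neg hyx]
      have h1 : iota x (y :: v) = 0 := by
        apply iota_apply_ne
        intro hc
        rw [replicate_cons_iff] at hc
        exact hyx hc.2
      rw [h1]
      ring

/-- The Magnus unit `1 + x`. -/
def genUnit (x : X) : (Mag X)ˣ := ⟨gen x, iota x, gen_mul_iota x, iota_mul_gen x⟩

lemma genUnit_val (x : X) : (genUnit x : Mag X) = gen x := rfl
lemma genUnit_inv_val (x : X) : ((genUnit x)⁻¹ : (Mag X)ˣ) = (iota x : Mag X) := rfl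

/-! ### Support and coefficients on powers of a single letter -/

lemma mul_replicate_apply (f g : Mag X) (x : X) (t : ℕ) :
    (f * g) (List.replicate t x)
      = ∑ i ∈ Finset.range (t + 1),
          f (List.replicate i x) * g (List.replicate (t - i) x) := by
  rw [Mag.mul_apply, List.length_replicate]
  refine Finset.sum_congr rfl fun i hi => ?_
  rw [Finset.mem_range] at hi
  have h1 : i ⊓ t = i := inf_eq_left.mpr (by omega)
  rw [List.take_replicate, List.drop_replicate, h1]

/-- `f` is supported on powers of the single letter `x`. -/
def SuppPow (x : X) (f : Mag X) : Prop :=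
  ∀ u, f u ≠ 0 → u = List.replicate u.length x

lemma suppPow_one (x : X) : SuppPow x (1 : Mag X) := by
  intro u hu
  by_cases h : u = []
  · subst h; simp
  · exact absurd (Mag.one_apply_ne h) hu

lemma suppPow_gen (x : X) : SuppPow x (gen x) := by
  intro u hu
  by_cases h : u = []
  · subst h; simp
  · by_cases h2 : u = [x]
    · subst h2; simp
    · exfalso
      apply hu
      rw [gen, Mag.add_apply, Mag.one_apply_ne h, delta_apply, if_neg h2]
      ring

lemma suppPow_iota (x : X) : SuppPow x (iota x) := by
  intro u hu
  by_contra h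
  exact hu (iota_apply_ne h)

lemma suppPow_mul {x : X} {f g : Mag X} (hf : SuppPow x f) (hg : SuppPow x g) :
    SuppPow x (f * g) := by
  intro u hu
  rw [Mag.mul_apply] at hu
  obtain ⟨i, hi, hne⟩ := Finset.exists_ne_zero_of_sum_ne_zero hu
  have h1 : f (u.take i) ≠ 0 := fun hc => hne (by rw [hc, zero_mul])
  have h2 : g (u.drop i) ≠ 0 := fun hc => hne (by rw [hc, mul_zero])
  have e1 := hf _ h1
  have e2 := hg _ h2
  conv_lhs => rw [← List.take_append_drop i u]
  conv_lhs => rw [e1, e2]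
  rw [← List.replicate_add]
  congr 1
  rw [List.length_take, List.length_drop]
  rcases le_total i u.length with hio | hio
  · rw [inf_eq_left.mpr hio]
    omega
  · rw [inf_eq_right.mpr hio]
    omega

lemma suppPow_pow {x : X} {f : Mag X} (hf : SuppPow x f) (r : ℕ) :
    SuppPow x (f ^ r) := by
  induction r with
  | zero => simpa using suppPow_one x
  | succ r ih =>
    rw [pow_succ]
    exact suppPow_mul ih hf

/-- The basic Magnus unit attached to a signed letter. -/
def mg (x : X) (b : Bool) : (Mag X)ˣ := cond b (genUnit x) (genUnit x)⁻¹

lemma mg_val_true (x : X) : ((mg x true : (Mag X)ˣ) : Mag X) = gen x := rfl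
lemma mg_val_false (x : X) : ((mg x false : (Mag X)ˣ) : Mag X) = iota x := rfl

lemma suppPow_mg (x : X) (b : Bool) : SuppPow x ((mg x b : (Mag X)ˣ) : Mag X) := by
  cases b
  · rw [mg_val_false]; exact suppPow_iota x
  · rw [mg_val_true]; exact suppPow_gen x

lemma gen_replicate (x : X) (m : ℕ) :
    gen x (List.replicate m x) = if m ≤ 1 then 1 else 0 := by
  match m with
  | 0 => simp [gen, Mag.add_apply, Mag.one_apply_nil, delta_apply]
  | 1 =>
    rw [gen, Mag.add_apply, Mag.one_apply_ne (by simp), delta_apply]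
    simp
  | (m + 2) =>
    rw [gen, Mag.add_apply, Mag.one_apply_ne (by simp), delta_apply, if_neg, if_neg (by omega)]
    · ring
    · intro hc
      have := congr_arg List.length hc
      simp at this

/-- Sign associated with a signed letter. -/
def sg (b : Bool) : ℤ := cond b 1 (-1)

lemma mg_coeff_nonneg (x : X) (b : Bool) (m : ℕ) :
    0 ≤ sg b ^ m * ((mg x b : (Mag X)ˣ) : Mag X) (List.replicate m x) ∧
      (m ≤ 1 → 0 < sg b ^ m * ((mg x b : (Mag X)ˣ) : Mag X) (List.replicate m x)) := by
  cases b
  · rw [mg_val_false, iota_replicate, sg]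
    simp only [cond]
    rw [← mul_pow]
    norm_num
  · rw [mg_val_true, gen_replicate, sg]
    simp only [cond, one_pow, one_mul]
    split_ifs with h
    · norm_num
    · refine ⟨le_refl 0, fun hc => absurd hc h⟩

lemma mg_pow_coeff (x : X) (b : Bool) (r : ℕ) (t : ℕ) :
    0 ≤ sg b ^ t * (((mg x b : (Mag X)ˣ) : Mag X) ^ r) (List.replicate t x) ∧
      (t ≤ r → 0 < sg b ^ t * (((mg x b : (Mag X)ˣ) : Mag X) ^ r) (List.replicate t x)) := by
  induction r generalizing t with
  | zero =>
    rw [pow_zero]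
    cases t with
    | zero =>
      simp only [pow_zero, one_mul]
      rw [show List.replicate 0 x = ([] : List X) from rfl, Mag.one_apply_nil]
      norm_num
    | succ t =>
      rw [Mag.one_apply_ne (by simp)]
      simp
  | succ r ih =>
    rw [pow_succ, mul_replicate_apply]
    rw [Finset.mul_sum]
    have hterm : ∀ i ∈ Finset.range (t + 1),
        sg b ^ t * ((((mg x b : (Mag X)ˣ) : Mag X) ^ r) (List.replicate i x) *
          ((mg x b : (Mag X)ˣ) : Mag X) (List.replicate (t - i) x))
        = (sg b ^ i * (((mg x b : (Mag X)ˣ) : Mag X) ^ r) (List.replicate i x)) *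
          (sg b ^ (t - i) * ((mg x b : (Mag X)ˣ) : Mag X) (List.replicate (t - i) x)) := by
      intro i hi
      rw [Finset.mem_range] at hi
      have hsg : sg b ^ t = sg b ^ i * sg b ^ (t - i) := by
        rw [← pow_add]
        congr 1
        omega
      rw [hsg]
      ring
    rw [Finset.sum_congr rfl hterm]
    constructor
    · refine Finset.sum_nonneg fun i hi => ?_
      exact mul_nonneg (ih i).1 (mg_coeff_nonneg x b (t - i)).1
    · intro ht
      refine Finset.sum_pos' (fun i hi => mul_nonneg (ih i).1 (mg_coeff_nonneg x b (t - i)).1)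
        ⟨t - 1, ?_, ?_⟩
      · rw [Finset.mem_range]; omega
      · exact mul_pos ((ih (t - 1)).2 (by omega)) ((mg_coeff_nonneg x b (t - (t - 1))).2 (by omega))

/-! ### Matching words against products of generator units -/

/-- `Matches L u` : `u` is a concatenation of powers of the letters of `L`, in order. -/
def Matches : List (X × Bool) → List X → Prop
  | [], u => u = []
  | p :: L, u => ∃ m v, u = List.replicate m p.1 ++ v ∧ Matches L v

/-- The product of Magnus units along a signed word. -/
def prodM (L : List (X × Bool)) : (Mag X)ˣ := (L.map fun p => mg p.1 p.2).prod

lemma prodM_nil : (prodM ([] : List (X × Bool)) : (Mag X)ˣ) = 1 := rfl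

lemma prodM_cons (p : X × Bool) (L : List (X × Bool)) :
    prodM (p :: L) = mg p.1 p.2 * prodM L := by
  rw [prodM, List.map_cons, List.prod_cons, prodM]

lemma matches_of_ne_zero :
    ∀ (L : List (X × Bool)) (u : List X), ((prodM L : (Mag X)ˣ) : Mag X) u ≠ 0 → Matches L u := by
  intro L
  induction L with
  | nil =>
    intro u hu
    by_contra h
    exact hu (Mag.one_apply_ne h)
  | cons p L ih =>
    intro u hu
    rw [prodM_cons, Units.val_mul, Mag.mul_apply] at hu
    obtain ⟨i, hi, hne⟩ := Finset.exists_ne_zero_of_sum_ne_zero hu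
    have h1 : ((mg p.1 p.2 : (Mag X)ˣ) : Mag X) (u.take i) ≠ 0 :=
      fun hc => hne (by rw [hc, zero_mul])
    have h2 : ((prodM L : (Mag X)ˣ) : Mag X) (u.drop i) ≠ 0 :=
      fun hc => hne (by rw [hc, mul_zero])
    refine ⟨(u.take i).length, u.drop i, ?_, ih _ h2⟩
    rw [← suppPow_mg p.1 p.2 _ h1, List.take_append_drop]

/-! ### The number of runs of a word -/

def runs : List X → ℕ
  | [] => 0
  | [_] => 1
  | a :: b :: t => (if a = b then 0 else 1) + runs (b :: t)

lemma runs_nil : runs ([] : List X) = 0 := rfl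
lemma runs_singleton (a : X) : runs [a] = 1 := rfl
lemma runs_cons_cons (a b : X) (t : List X) :
    runs (a :: b :: t) = (if a = b then 0 else 1) + runs (b :: t) := rfl

lemma runs_le_cons (a : X) (l : List X) : runs l ≤ runs (a :: l) := by
  cases l with
  | nil => simp [runs_nil, runs_singleton]
  | cons b t =>
    rw [runs_cons_cons]
    omega

lemma runs_cons_cons_same (a : X) (t : List X) : runs (a :: a :: t) = runs (a :: t) := by
  rw [runs_cons_cons, if_pos rfl, zero_add]

lemma runs_cons_le_cons_cons (z x : X) (w : List X) : runs (z :: w) ≤ runs (z :: x :: w) := by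
  cases w with
  | nil =>
    rw [runs_singleton, runs_cons_cons, runs_singleton]
    omega
  | cons c t =>
    rw [runs_cons_cons, runs_cons_cons (a := z), runs_cons_cons (a := x)]
    by_cases hzc : z = c
    · by_cases hzx : z = x
      · rw [if_pos hzc, if_pos hzx, if_pos (hzx ▸ hzc)]
        omega
      · rw [if_pos hzc, if_neg hzx]
        omega
    · by_cases hzx : z = x
      · have hxc : ¬ x = c := fun hc => hzc (hzx.trans hc)
        rw [if_neg hzc, if_pos hzx, if_neg hxc]
        omega
      · rw [if_neg hzc, if_neg hzx]
        omega

lemma runs_replicate_append (x : X) (w : List X) :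
    ∀ m, 1 ≤ m → runs (List.replicate m x ++ w) = runs (x :: w) := by
  intro m
  induction m with
  | zero => omega
  | succ m ih =>
    intro _
    by_cases hm : 1 ≤ m
    · have : List.replicate (m + 1) x ++ w = x :: (List.replicate m x ++ w) := by
        rw [List.replicate_succ, List.cons_append]
      rw [this]
      have hne : List.replicate m x ++ w = x :: (List.replicate (m-1) x ++ w) := by
        conv_lhs => rw [show m = 1 + (m - 1) by omega]
        rw [List.replicate_add, List.replicate_one, List.cons_append, List.nil_append,
          List.cons_append]
      rw [hne, runs_cons_cons_same, ← hne, ih hm]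
    · have hm0 : m = 0 := by omega
      subst hm0
      simp

lemma runs_matches :
    ∀ (L : List (X × Bool)) (u : List X), Matches L u →
      runs u ≤ runs (L.map Prod.fst) ∧
        ∀ z, runs (z :: u) ≤ runs (z :: L.map Prod.fst) := by
  intro L
  induction L with
  | nil =>
    intro u hu
    have : u = [] := hu
    subst this
    exact ⟨le_refl _, fun z => le_refl _⟩
  | cons p L ih =>
    intro u hu
    obtain ⟨m, v, huv, hv⟩ := hu
    obtain ⟨h1, h2⟩ := ih v hv
    subst huv
    rw [List.map_cons]
    by_cases hm : 1 ≤ m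
    · constructor
      · rw [runs_replicate_append _ _ _ hm]
        exact h2 p.1
      · intro z
        have hz : z :: (List.replicate m p.1 ++ v) = z :: p.1 :: (List.replicate (m-1) p.1 ++ v) := by
          congr 1
          conv_lhs => rw [show m = 1 + (m - 1) by omega]
          rw [List.replicate_add, List.replicate_one, List.cons_append, List.nil_append,
            List.cons_append]
        rw [hz, runs_cons_cons]
        have hx : p.1 :: (List.replicate (m-1) p.1 ++ v) = List.replicate ((m-1)+1) p.1 ++ v := by
          rw [List.replicate_succ, List.cons_append]
        rw [hx, runs_replicate_append _ _ _ (by omega)]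
        rw [runs_cons_cons]
        exact add_le_add (le_refl _) (h2 p.1)
    · have hm0 : m = 0 := by omega
      subst hm0
      rw [List.replicate_zero, List.nil_append]
      constructor
      · exact h1.trans (runs_le_cons _ _)
      · intro z
        exact (h2 z).trans (runs_cons_le_cons_cons _ _ _)

lemma not_matches_replicate_append (L : List (X × Bool)) (q : X × Bool) (M : List (X × Bool))
    (hq : L = q :: M) (x : X) (hx : q.1 ≠ x) (t : ℕ) (ht : 1 ≤ t) :
    ¬ Matches L (List.replicate t x ++ L.map Prod.fst) := by
  intro hmat
  have hb := (runs_matches L _ hmat).1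
  rw [runs_replicate_append _ _ _ ht] at hb
  rw [hq, List.map_cons, runs_cons_cons, if_neg (fun hc => hx hc.symm)] at hb
  omega

/-! ### The key coefficient of a reduced word is nonzero -/

lemma mg_pow_coeff_ne_zero (x : X) (b : Bool) (r : ℕ) :
    (((mg x b : (Mag X)ˣ) : Mag X) ^ r) (List.replicate r x) ≠ 0 := by
  intro h0
  have := (mg_pow_coeff x b r r).2 (le_refl r)
  rw [h0, mul_zero] at this
  exact lt_irrefl 0 this

lemma prodM_coeff_ne_zero :
    ∀ (N : ℕ) (L : List (X × Bool)), L.length ≤ N → L ≠ [] →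
      List.Chain' (fun p q : X × Bool => p.1 = q.1 → p.2 = q.2) L →
      ((prodM L : (Mag X)ˣ) : Mag X) (L.map Prod.fst) ≠ 0 := by
  intro N
  induction N with
  | zero =>
    intro L hlen hne _
    cases L with
    | nil => exact absurd rfl hne
    | cons p T => simp at hlen
  | succ N ihN =>
    rintro L hlen hne hch
    obtain ⟨p, T, rfl⟩ : ∃ p T, L = p :: T := by
      cases L with
      | nil => exact absurd rfl hne
      | cons p T => exact ⟨p, T, rfl⟩
    set L : List (X × Bool) := p :: T with hLdef
    set P : X × Bool → Bool := fun q => decide (q = p) with hPdef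
    set r : ℕ := (L.takeWhile P).length with hrdef
    set L2 : List (X × Bool) := L.dropWhile P with hL2def
    have hrep : L.takeWhile P = List.replicate r p := by
      refine List.eq_replicate_of_mem (fun b hb => ?_)
      have := List.mem_takeWhile_imp hb
      rw [hPdef] at this
      exact of_decide_eq_true this
    have hr1 : 1 ≤ r := by
      have hcons : L.takeWhile P = p :: T.takeWhile P := by
        apply List.takeWhile_cons_of_pos
        rw [hPdef]
        simp
      rw [hrdef, hcons]
      simp
    have hdecomp : L = List.replicate r p ++ L2 := by
      rw [← hrep, hL2def, List.takeWhile_append_dropWhile]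
    have hlenL : L2.length + r = L.length := by
      have := congr_arg List.length hdecomp
      rw [List.length_append, List.length_replicate] at this
      omega
    -- chain' decomposition
    have hch2 : List.Chain' (fun p q : X × Bool => p.1 = q.1 → p.2 = q.2)
        (List.replicate r p ++ L2) := by rw [← hdecomp]; exact hch
    rw [List.Chain', List.isChain_append] at hch2
    obtain ⟨-, hchL2, hrel⟩ := hch2
    -- the product decomposition
    have hprodsplit : ((prodM L : (Mag X)ˣ) : Mag X)
        = (((mg p.1 p.2 : (Mag X)ˣ) : Mag X) ^ r) * ((prodM L2 : (Mag X)ˣ) : Mag X) := by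
      conv_lhs => rw [hdecomp]
      rw [prodM, List.map_append, List.prod_append, List.map_replicate, List.prod_replicate]
      rw [Units.val_mul, Units.val_pow_eq_pow_val]
      rfl
    have hmapsplit : L.map Prod.fst = List.replicate r p.1 ++ L2.map Prod.fst := by
      conv_lhs => rw [hdecomp]
      rw [List.map_append, List.map_replicate]
    cases hc : L2 with
    | nil =>
      -- L is a single run
      rw [hprodsplit, hmapsplit, hc]
      rw [List.map_nil, List.append_nil]
      rw [prodM_nil, Units.val_one, mul_one]
      exact mg_pow_coeff_ne_zero p.1 p.2 r
    | cons q M =>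
      -- head of L2 is a different letter
      have hdw : List.dropWhile P L = q :: M := by rw [← hL2def, hc]
      have hnl : List.dropWhile P L ≠ [] := by rw [hdw]; simp
      have hqP : ¬ (P q = true) := by
        have h0 := List.head_dropWhile_not P hnl
        have h1 : (List.dropWhile P L).head? = some q := by rw [hdw]; rfl
        have h2 : some ((List.dropWhile P L).head hnl) = some q := by
          rw [← List.head?_eq_head, h1]
        rw [Option.some.inj h2] at h0
        simp [h0]
      have hqne : q ≠ p := by
        intro hcq
        apply hqP
        rw [hcq, hPdef]
        simp
      have hq1 : q.1 ≠ p.1 := by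
        intro hfst
        apply hqne
        have hlast : p ∈ (List.replicate r p).getLast? := by
          rw [List.getLast?_replicate, if_neg (by omega)]
          rfl
        have hhd : q ∈ List.head? L2 := by rw [hc]; rfl
        have hsnd := hrel p hlast q hhd hfst.symm
        exact Prod.ext hfst hsnd.symm
      -- coefficient of prodM L2 at its own word is nonzero, by induction
      have hL2ne : ((prodM L2 : (Mag X)ˣ) : Mag X) (L2.map Prod.fst) ≠ 0 := by
        apply ihN L2 (by omega) (by rw [hc]; simp) hchL2
      -- now compute the coefficient as a single product
      rw [hprodsplit, hmapsplit, Mag.mul_apply]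
      rw [Finset.sum_eq_single r]
      · have htake : (List.replicate r p.1 ++ L2.map Prod.fst).take r = List.replicate r p.1 :=
          List.take_left' List.length_replicate
        have hdrop : (List.replicate r p.1 ++ L2.map Prod.fst).drop r = L2.map Prod.fst :=
          List.drop_left' List.length_replicate
        rw [htake, hdrop]
        exact mul_ne_zero (mg_pow_coeff_ne_zero p.1 p.2 r) hL2ne
      · intro i hi hir
        rw [Finset.mem_range, List.length_append, List.length_replicate] at hi
        rcases lt_or_gt_of_ne hir with hilt | higt
        · -- i < r : the second factor vanishes
          have hdrop : (List.replicate r p.1 ++ L2.map Prod.fst).drop i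
              = List.replicate (r - i) p.1 ++ L2.map Prod.fst := by
            rw [List.drop_append_of_le_length (by rw [List.length_replicate]; omega),
              List.drop_replicate]
          rw [hdrop]
          have hzero : ((prodM L2 : (Mag X)ˣ) : Mag X)
              (List.replicate (r - i) p.1 ++ L2.map Prod.fst) = 0 := by
            by_contra hnz
            exact not_matches_replicate_append L2 q M hc p.1 hq1 (r - i) (by omega)
              (matches_of_ne_zero L2 _ hnz)
          rw [hzero, mul_zero]
        · -- i > r : the first factor vanishes
          have htake : (List.replicate r p.1 ++ L2.map Prod.fst).take i
              = List.replicate r p.1 ++ (L2.map Prod.fst).take (i - r) := by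
            conv_lhs => rw [show i = (List.replicate r p.1).length + (i - r) by
              rw [List.length_replicate]; omega]
            exact List.take_length_add_append _
          rw [htake]
          have hzero : (((mg p.1 p.2 : (Mag X)ˣ) : Mag X) ^ r)
              (List.replicate r p.1 ++ (L2.map Prod.fst).take (i - r)) = 0 := by
            by_contra hnz
            have hreplic := suppPow_pow (suppPow_mg p.1 p.2) r _ hnz
            have hmem : q.1 ∈ List.replicate r p.1 ++ (L2.map Prod.fst).take (i - r) := by
              apply List.mem_append_right
              rw [hc, List.map_cons, show i - r = (i - r - 1) + 1 by omega,
                List.take_succ_cons]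
              exact List.mem_cons_self
            have := (List.eq_replicate_iff.mp hreplic).2 q.1 hmem
            exact hq1 this
          rw [hzero, zero_mul]
      · intro hcon
        rw [Finset.mem_range, List.length_append, List.length_replicate] at hcon
        omega

/-! ### The filtration by order (lowest degree) -/

/-- `Dlt d f` means all coefficients of `f` in degrees `< d` vanish. -/
def Dlt (d : ℕ) (f : Mag X) : Prop := ∀ u : List X, u.length < d → f u = 0

lemma dlt_zero (f : Mag X) : Dlt 0 f := fun _ h => absurd h (by omega)

lemma dlt_of_zero (d : ℕ) : Dlt d (0 : Mag X) := fun _ _ => rfl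

lemma dlt_mono {d e : ℕ} (h : e ≤ d) {f : Mag X} (hf : Dlt d f) : Dlt e f :=
  fun u hu => hf u (by omega)

lemma dlt_add {d : ℕ} {f g : Mag X} (hf : Dlt d f) (hg : Dlt d g) : Dlt d (f + g) := by
  intro u hu
  rw [Mag.add_apply, hf u hu, hg u hu, add_zero]

lemma dlt_neg {d : ℕ} {f : Mag X} (hf : Dlt d f) : Dlt d (-f) := by
  intro u hu
  rw [Mag.neg_apply, hf u hu, neg_zero]

lemma dlt_sub {d : ℕ} {f g : Mag X} (hf : Dlt d f) (hg : Dlt d g) : Dlt d (f - g) := by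
  intro u hu
  rw [Mag.sub_apply, hf u hu, hg u hu, sub_zero]

lemma dlt_mul {p q : ℕ} {f g : Mag X} (hf : Dlt p f) (hg : Dlt q g) : Dlt (p + q) (f * g) := by
  intro u hu
  rw [Mag.mul_apply]
  refine Finset.sum_eq_zero fun i hi => ?_
  rw [Finset.mem_range] at hi
  by_cases hip : i < p
  · have : (u.take i).length < p := by
      rw [List.length_take]
      rcases le_total i u.length with h1 | h1
      · rw [inf_eq_left.mpr h1]; omega
      · rw [inf_eq_right.mpr h1]; omega
    rw [hf _ this, zero_mul]
  · have : (u.drop i).length < q := by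
      rw [List.length_drop]
      omega
    rw [hg _ this, mul_zero]

/-- Scalar multiple. -/
def sc (s : ℤ) (a : Mag X) : Mag X := fun u => s * a u

lemma sc_apply (s : ℤ) (a : Mag X) (u : List X) : sc s a u = s * a u := rfl

lemma sc_one (a : Mag X) : sc 1 a = a := by funext u; rw [sc_apply, one_mul]

lemma sc_zero (a : Mag X) : sc 0 a = 0 := by funext u; rw [sc_apply, zero_mul]; rfl

lemma sc_neg_one (a : Mag X) : sc (-1) a = -a := by
  funext u; rw [sc_apply, Mag.neg_apply]; ring

lemma sc_add_sc (s t : ℤ) (a : Mag X) : sc s a + sc t a = sc (s + t) a := by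
  funext u; rw [Mag.add_apply, sc_apply, sc_apply, sc_apply]; ring

lemma dlt_sc {d : ℕ} (s : ℤ) {a : Mag X} (ha : Dlt d a) : Dlt d (sc s a) := by
  intro u hu
  rw [sc_apply, ha u hu, mul_zero]

lemma sc_mul (s : ℤ) (a f : Mag X) : sc s a * f = sc s (a * f) := by
  funext u
  rw [Mag.mul_apply, sc_apply, Mag.mul_apply, Finset.mul_sum]
  refine Finset.sum_congr rfl fun i hi => ?_
  rw [sc_apply]
  ring

/-- Constant coefficient, as a monoid homomorphism. -/
def eps : Mag X →* ℤ where
  toFun f := f []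
  map_one' := Mag.one_apply_nil
  map_mul' f g := by
    show (f * g) [] = f [] * g []
    rw [Mag.mul_apply]
    simp

lemma dlt_one_of_const_one {f : Mag X} (hf : f [] = 1) : Dlt 1 (f - 1) := by
  intro u hu
  have hnil : u = [] := by
    cases u with
    | nil => rfl
    | cons a t => simp at hu
  subst hnil
  rw [Mag.sub_apply, hf, Mag.one_apply_nil, sub_self]

/-- Conjugating an element of order `≥ d` by a unit congruent to `1` changes it by
something of order `≥ d + 1`. -/
lemma conj_congr {d : ℕ} (v : (Mag X)ˣ)
    (hv : Dlt 1 ((v : Mag X) - 1)) (hvi : Dlt 1 (((v⁻¹ : (Mag X)ˣ) : Mag X) - 1))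
    {c : Mag X} (hc : Dlt d c) :
    Dlt (d + 1) (((v⁻¹ : (Mag X)ˣ) : Mag X) * c * (v : Mag X) - c) := by
  have hvv : ((v⁻¹ : (Mag X)ˣ) : Mag X) * (v : Mag X) = 1 := by
    rw [← Units.val_mul, inv_mul_cancel, Units.val_one]
  have key : ((v⁻¹ : (Mag X)ˣ) : Mag X) * c * (v : Mag X) - c
      = ((v⁻¹ : (Mag X)ˣ) : Mag X) * (c * ((v : Mag X) - 1))
        - ((v⁻¹ : (Mag X)ˣ) : Mag X) * ((((v : Mag X)) - 1) * c) := by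
    have expand : ((v⁻¹ : (Mag X)ˣ) : Mag X) * (c * ((v : Mag X) - 1))
        - ((v⁻¹ : (Mag X)ˣ) : Mag X) * ((((v : Mag X)) - 1) * c)
        = ((v⁻¹ : (Mag X)ˣ) : Mag X) * c * (v : Mag X)
          - (((v⁻¹ : (Mag X)ˣ) : Mag X) * (v : Mag X)) * c := by
      noncomm_ring
    rw [expand, hvv, one_mul]
  rw [key]
  have h1 : Dlt (d + 1) (((v⁻¹ : (Mag X)ˣ) : Mag X) * (c * ((v : Mag X) - 1))) := by
    have := dlt_mul (dlt_zero ((v⁻¹ : (Mag X)ˣ) : Mag X)) (dlt_mul hc hv)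
    simpa using this
  have h2 : Dlt (d + 1) (((v⁻¹ : (Mag X)ˣ) : Mag X) * ((((v : Mag X)) - 1) * c)) := by
    have := dlt_mul (dlt_zero ((v⁻¹ : (Mag X)ˣ) : Mag X)) (dlt_mul hv hc)
    have h' : 1 + d = d + 1 := by omega
    rw [← h']
    simpa using this
  exact dlt_sub h1 h2

lemma conj_one_add (v : (Mag X)ˣ) (c : Mag X) :
    ((v⁻¹ : (Mag X)ˣ) : Mag X) * (1 + c) * (v : Mag X) - (1 + c)
      = ((v⁻¹ : (Mag X)ˣ) : Mag X) * c * (v : Mag X) - c := by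
  have hvv : ((v⁻¹ : (Mag X)ˣ) : Mag X) * (v : Mag X) = 1 := by
    rw [← Units.val_mul, inv_mul_cancel, Units.val_one]
  have expand : ((v⁻¹ : (Mag X)ˣ) : Mag X) * (1 + c) * (v : Mag X)
      = ((v⁻¹ : (Mag X)ˣ) : Mag X) * (v : Mag X)
        + ((v⁻¹ : (Mag X)ˣ) : Mag X) * c * (v : Mag X) := by
    noncomm_ring
  rw [expand, hvv]
  abel

/-- Multiplying elements of the form `1 + s•a (mod deg > d)` adds the scalars. -/
lemma key_prod {d : ℕ} (hd : 1 ≤ d) {a : Mag X} (hDa : Dlt d a) :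
    ∀ l : List ((Mag X) × ℤ),
      (∀ p ∈ l, Dlt (d + 1) (p.1 - (1 + sc p.2 a))) →
      Dlt (d + 1) ((l.map Prod.fst).prod - (1 + sc (l.map Prod.snd).sum a)) := by
  intro l
  induction l with
  | nil =>
    intro _
    simp only [List.map_nil, List.prod_nil, List.sum_nil, sc_zero, add_zero, sub_self]
    exact dlt_of_zero _
  | cons p l ih =>
    intro hall
    have h1 := hall p List.mem_cons_self
    have h2 := ih (fun q hq => hall q (List.mem_cons_of_mem _ hq))
    rw [List.map_cons, List.map_cons, List.prod_cons, List.sum_cons]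
    set f := p.1
    set s := p.2
    set P := (l.map Prod.fst).prod
    set S := (l.map Prod.snd).sum
    have hC : sc (s + S) a = sc s a + sc S a := (sc_add_sc s S a).symm
    have key : f * P - (1 + sc (s + S) a)
        = (f - (1 + sc s a)) * P + (1 + sc s a) * (P - (1 + sc S a))
          + ((sc s a) * (sc S a)) := by
      rw [hC]
      noncomm_ring
    rw [key]
    refine dlt_add (dlt_add ?_ ?_) ?_
    · have := dlt_mul h1 (dlt_zero P)
      simpa using this
    · have := dlt_mul (dlt_zero (1 + sc s a)) h2
      simpa using this
    · have := dlt_mul (dlt_sc s hDa) (dlt_sc S hDa)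
      exact dlt_mono (by omega) this

end Mag

/-! ### The Magnus homomorphism on the free group -/

section Magnus

variable {X : Type*}

/-- The Magnus morphism `x ↦ 1 + x`. -/
def mu : FreeGroup X →* (Mag X)ˣ := FreeGroup.lift fun x => Mag.genUnit x

lemma mu_const_coeff (g : FreeGroup X) : ((mu g : (Mag X)ˣ) : Mag X) [] = 1 := by
  have htriv : (Units.map (Mag.eps : Mag X →* ℤ)).comp (mu : FreeGroup X →* (Mag X)ˣ)
      = (1 : FreeGroup X →* ℤˣ) := by
    apply FreeGroup.ext_hom
    intro x
    rw [MonoidHom.comp_apply, MonoidHom.one_apply]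
    apply Units.ext
    rw [Units.coe_map, Units.val_one, mu, FreeGroup.lift_apply_of]
    show Mag.gen x [] = 1
    rw [Mag.gen, Mag.add_apply, Mag.one_apply_nil, Mag.delta_apply, if_neg (by simp)]
    ring
  have h2 : Units.map (Mag.eps : Mag X →* ℤ) (mu g) = 1 := by
    rw [← MonoidHom.comp_apply, htriv, MonoidHom.one_apply]
  have h3 := congrArg Units.val h2
  rw [Units.coe_map, Units.val_one] at h3
  exact h3

lemma mu_dlt_one (g : FreeGroup X) : Mag.Dlt 1 (((mu g : (Mag X)ˣ) : Mag X) - 1) :=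
  Mag.dlt_one_of_const_one (mu_const_coeff g)

lemma mu_inv_dlt_one (g : FreeGroup X) :
    Mag.Dlt 1 ((((mu g)⁻¹ : (Mag X)ˣ) : Mag X) - 1) := by
  have : ((mu g)⁻¹ : (Mag X)ˣ) = mu g⁻¹ := by rw [map_inv]
  rw [this]
  exact mu_dlt_one g⁻¹

/-- Reduced words (in the sense of `FreeGroup.reduce`) satisfy the chain condition:
adjacent letters with equal first components have equal signs. -/
lemma chain'_of_no_cancel :
    ∀ (L : List (X × Bool)),
      (∀ (L₁ L₂ : List (X × Bool)) (x : X) (b : Bool), L ≠ L₁ ++ (x, b) :: (x, !b) :: L₂) →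
      List.Chain' (fun p q : X × Bool => p.1 = q.1 → p.2 = q.2) L := by
  intro L
  induction L with
  | nil => intro _; exact List.isChain_nil
  | cons p M ih =>
    intro hno
    cases M with
    | nil => exact List.isChain_singleton p
    | cons q T =>
      rw [List.Chain', List.isChain_cons_cons]
      constructor
      · intro hfst
        by_contra hsnd
        have hq : q = (p.1, !p.2) := by
          have h2 : q.2 = !p.2 := by
            cases hp2 : p.2 <;> cases hq2 : q.2 <;> simp_all
          exact Prod.ext hfst.symm h2
        exact hno [] T p.1 p.2 (by rw [hq]; rfl)
      · apply ih
        intro L₁ L₂ x b hc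
        exact hno (p :: L₁) L₂ x b (by rw [hc]; rfl)

/-- Injectivity of the Magnus embedding, in the form we need: the coefficient of the word
of letters of `toWord w` in `mu w` is nonzero. -/
lemma mu_coeff_ne_zero [DecidableEq X] {w : FreeGroup X} (hw : w ≠ 1) :
    ((mu w : (Mag X)ˣ) : Mag X) ((FreeGroup.toWord w).map Prod.fst) ≠ 0 := by
  have hW : FreeGroup.toWord w ≠ [] := fun hc => hw (FreeGroup.toWord_eq_nil_iff.mp hc)
  have hchain : List.Chain' (fun p q : X × Bool => p.1 = q.1 → p.2 = q.2)
      (FreeGroup.toWord w) := by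
    apply chain'_of_no_cancel
    intro L₁ L₂ x b hc
    refine FreeGroup.reduce.not (p := False)
      (L₁ := FreeGroup.toWord w) (L₂ := L₁) (L₃ := L₂) (x := x) (b := b) ?_
    rw [FreeGroup.reduce_toWord]
    exact hc
  have hprod : mu w = Mag.prodM (FreeGroup.toWord w) := by
    conv_lhs => rw [← FreeGroup.mk_toWord (x := w)]
    rw [mu, FreeGroup.lift_mk]
    rfl
  rw [hprod]
  exact Mag.prodM_coeff_ne_zero (FreeGroup.toWord w).length _ (le_refl _) hW hchain

end Magnus

end
end MagnusProof

/-- In a free group `F`, if `w ≠ 1` and a product of conjugates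
`∏_{j=1}^{n} g_j⁻¹ w^{ε_j} g_j` with `ε_j = ±1` is trivial, then `∑_j ε_j = 0`. -/
theorem freeGroup_exponent_sum_zero {X : Type*} (w : FreeGroup X) (hw : w ≠ 1)
    (n : ℕ) (g : Fin n → FreeGroup X) (ε : Fin n → ℤ)
    (hε : ∀ j, ε j = 1 ∨ ε j = -1)
    (h : ((List.finRange n).map fun j => (g j)⁻¹ * w ^ (ε j) * g j).prod = 1) :
    ∑ j, ε j = 0 := by
  classical
  open MagnusProof in
  -- the element `a = mu w - 1`
  set a : Mag X := ((mu w : (Mag X)ˣ) : Mag X) - 1 with ha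
  have hwit : ∃ m : ℕ, ∃ u : List X, u.length = m ∧ a u ≠ 0 := by
    refine ⟨((FreeGroup.toWord w).map Prod.fst).length,
      (FreeGroup.toWord w).map Prod.fst, rfl, ?_⟩
    have hne : (FreeGroup.toWord w).map Prod.fst ≠ [] := by
      intro hc
      apply hw
      apply FreeGroup.toWord_eq_nil_iff.mp
      cases hcc : FreeGroup.toWord w
      · rfl
      · rw [hcc] at hc; simp at hc
    rw [ha, Mag.sub_apply, Mag.one_apply_ne hne, sub_zero]
    exact mu_coeff_ne_zero hw
  set d : ℕ := Nat.find hwit with hd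
  obtain ⟨u₀, hu₀len, hu₀ne⟩ := Nat.find_spec hwit
  have hDa : Mag.Dlt d a := by
    intro u hu
    by_contra hne
    have : d ≤ u.length := Nat.find_le ⟨u, rfl, hne⟩
    omega
  have hd1 : 1 ≤ d := by
    by_contra hc
    have hd0 : d = 0 := by omega
    rw [← hd, hd0] at hu₀len
    have : u₀ = [] := List.length_eq_zero_iff.mp hu₀len
    subst this
    apply hu₀ne
    rw [ha, Mag.sub_apply, mu_const_coeff, Mag.one_apply_nil, sub_self]
  -- per-factor congruence
  have hfac : ∀ j : Fin n,
      Mag.Dlt (d + 1) (((mu ((g j)⁻¹ * w ^ (ε j) * g j) : (Mag X)ˣ) : Mag X)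
        - (1 + Mag.sc (ε j) a)) := by
    intro j
    set v : (Mag X)ˣ := mu (g j) with hv
    have hsplit : mu ((g j)⁻¹ * w ^ (ε j) * g j) = v⁻¹ * (mu w ^ (ε j)) * v := by
      rw [map_mul, map_mul, map_inv, map_zpow]
    rcases hε j with he | he
    · rw [he] at hsplit ⊢
      rw [hsplit, zpow_one]
      have hval : ((v⁻¹ * mu w * v : (Mag X)ˣ) : Mag X)
          = ((v⁻¹ : (Mag X)ˣ) : Mag X) * (1 + a) * ((v : (Mag X)ˣ) : Mag X) := by
        rw [Units.val_mul, Units.val_mul]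
        congr 1
        congr 1
        rw [ha]
        abel
      rw [hval, Mag.sc_one]
      have hkey : ((v⁻¹ : (Mag X)ˣ) : Mag X) * (1 + a) * ((v : (Mag X)ˣ) : Mag X) - (1 + a)
          = ((v⁻¹ : (Mag X)ˣ) : Mag X) * a * ((v : (Mag X)ˣ) : Mag X) - a :=
        Mag.conj_one_add v a
      rw [hkey]
      exact Mag.conj_congr v (mu_dlt_one (g j)) (mu_inv_dlt_one (g j)) hDa
    · rw [he] at hsplit ⊢
      rw [hsplit, zpow_neg_one]
      set b : Mag X := (((mu w)⁻¹ : (Mag X)ˣ) : Mag X) - 1 with hb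
      have hb1 : Mag.Dlt 1 b := mu_inv_dlt_one w
      have hba : Mag.Dlt (d + 1) (b + a) := by
        have hvv : ((mu w : (Mag X)ˣ) : Mag X) * (((mu w)⁻¹ : (Mag X)ˣ) : Mag X) = 1 := by
          rw [← Units.val_mul, mul_inv_cancel, Units.val_one]
        have hexp : (1 + a) * (1 + b) = ((mu w : (Mag X)ˣ) : Mag X)
            * (((mu w)⁻¹ : (Mag X)ˣ) : Mag X) := by
          rw [ha, hb]
          noncomm_ring
        have hzero : a + b + a * b = 0 := by
          have : (1 + a) * (1 + b) - 1 = a + b + a * b := by noncomm_ring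
          rw [← this, hexp, hvv, sub_self]
        have hident : b + a = -(a * b) := by
          have hz2 : b + a + a * b = 0 := by rw [← hzero]; abel
          exact add_eq_zero_iff_eq_neg.mp hz2
        rw [hident]
        exact Mag.dlt_neg (Mag.dlt_mul hDa hb1)
      have hbd : Mag.Dlt d b := by
        have : b = (b + a) - a := by abel
        rw [this]
        exact Mag.dlt_sub (Mag.dlt_mono (by omega) hba) hDa
      have hval : ((v⁻¹ * (mu w)⁻¹ * v : (Mag X)ˣ) : Mag X)
          = ((v⁻¹ : (Mag X)ˣ) : Mag X) * (1 + b) * ((v : (Mag X)ˣ) : Mag X) := by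
        rw [Units.val_mul, Units.val_mul]
        congr 1
        congr 1
        rw [hb]
        abel
      rw [hval]
      have hkey := Mag.conj_one_add v b
      have hconj := Mag.conj_congr v (mu_dlt_one (g j)) (mu_inv_dlt_one (g j)) hbd
      rw [← hkey] at hconj
      -- target - (1 + sc (-1) a) = (conj - (1+b)) + (b + a)
      have hsc : Mag.sc (-1) a = -a := Mag.sc_neg_one a
      have hfinal : ((v⁻¹ : (Mag X)ˣ) : Mag X) * (1 + b) * ((v : (Mag X)ˣ) : Mag X)
          - (1 + Mag.sc (-1) a)
          = (((v⁻¹ : (Mag X)ˣ) : Mag X) * (1 + b) * ((v : (Mag X)ˣ) : Mag X) - (1 + b))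
            + (b + a) := by
        rw [hsc]
        abel
      rw [hfinal]
      exact Mag.dlt_add hconj hba
  -- now take the product over all j
  have hμprod := congrArg (mu (X := X)) h
  rw [map_list_prod, map_one, List.map_map] at hμprod
  have hvalprod := congrArg (Units.coeHom (Mag X)) hμprod
  rw [map_list_prod, map_one, List.map_map] at hvalprod
  -- apply key_prod to the list of pairs
  set l : List ((Mag X) × ℤ) := (List.finRange n).map
    (fun j => (((mu ((g j)⁻¹ * w ^ (ε j) * g j) : (Mag X)ˣ) : Mag X), ε j)) with hl
  have hall : ∀ p ∈ l, Mag.Dlt (d + 1) (p.1 - (1 + Mag.sc p.2 a)) := by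
    intro p hp
    rw [hl, List.mem_map] at hp
    obtain ⟨j, _, rfl⟩ := hp
    exact hfac j
  have hKP := Mag.key_prod hd1 hDa l hall
  have hfst : l.map Prod.fst = (List.finRange n).map
      (fun j => ((mu ((g j)⁻¹ * w ^ (ε j) * g j) : (Mag X)ˣ) : Mag X)) := by
    rw [hl, List.map_map]
    rfl
  have hsnd : l.map Prod.snd = (List.finRange n).map ε := by
    rw [hl, List.map_map]
    rfl
  rw [hfst, hsnd] at hKP
  have hprod1 : ((List.finRange n).map
      (fun j => ((mu ((g j)⁻¹ * w ^ (ε j) * g j) : (Mag X)ˣ) : Mag X))).prod = 1 := by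
    exact hvalprod
  rw [hprod1] at hKP
  set S : ℤ := ((List.finRange n).map ε).sum with hS
  have hSsum : ∑ j, ε j = S := by
    rw [hS, Fin.sum_univ_def]
  rw [hSsum]
  -- evaluate at u₀
  have heval := hKP u₀ (by omega)
  rw [Mag.sub_apply, Mag.add_apply, Mag.sc_apply] at heval
  have h1u₀ : (1 : Mag X) u₀ = if u₀ = [] then 1 else 0 := Mag.one_apply u₀
  have : S * a u₀ = 0 := by
    rcases eq_or_ne u₀ ([] : List X) with hnil | hnil
    · exfalso
      subst hnil
      simp at hu₀len
      omega
    · rw [Mag.one_apply_ne hnil] at heval h1u₀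
      omega
  rcases mul_eq_zero.mp this with h0 | h0
  · exact h0
  · exact absurd h0 hu₀ne
end

section
/- Let F be a free group on an arbitrary set and let n ≥ 0. Then the quotient group F/F^{(n)} of F by the n-th term of its derived series is left-orderable: there exists a linear order ≤ on F/F^{(n)} such that for all a, b, c ∈ F/F^{(n)}, b ≤ c implies a·b ≤ a·c. -/
attribute [local instance] derivedSeries_normal

/-- A group is left-orderable if it carries a linear order invariant under
left multiplication. -/
def IsLeftOrderable (G : Type*) [Group G] : Prop :=
  ∃ r : LinearOrder G, ∀ a b c : G, r.le b c → r.le (a * b) (a * c)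

/-- In a left-ordered group, strict inequality is also left-invariant. -/
theorem lt_left_invariant {G : Type*} [Group G] [LinearOrder G]
    (h : ∀ a b c : G, b ≤ c → a * b ≤ a * c) :
    ∀ a b c : G, b < c → a * b < a * c := fun a b c hbc =>
  lt_of_le_of_ne (h a b c hbc.le) fun he => hbc.ne (mul_left_cancel he)

/-- Left-orderability pulls back along an injective group homomorphism. -/
theorem IsLeftOrderable.of_injective {G H : Type*} [Group G] [Group H] (f : G →* H)
    (hinj : Function.Injective f) (h : IsLeftOrderable H) : IsLeftOrderable G := by
  obtain ⟨r, hr⟩ := h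
  letI := r
  refine ⟨LinearOrder.lift' f hinj, fun a b c hle => ?_⟩
  show f (a * b) ≤ f (a * c)
  rw [map_mul, map_mul]
  exact hr _ _ _ hle

/-- A group admitting an injective multiplication-to-addition map into a linearly
ordered additive group with left-invariant order is left-orderable. -/
theorem isLeftOrderable_of_mulAdd {G A : Type*} [Group G] [AddGroup A] [LinearOrder A]
    (hA : ∀ a b c : A, b ≤ c → a + b ≤ a + c)
    (f : G → A) (hinj : Function.Injective f)
    (hf : ∀ a b, f (a * b) = f a + f b) : IsLeftOrderable G := by
  refine ⟨LinearOrder.lift' f hinj, fun a b c hle => ?_⟩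
  show f (a * b) ≤ f (a * c)
  rw [hf, hf]
  exact hA _ _ _ hle

/-- An extension of a left-orderable group by a left-orderable group is
left-orderable. -/
theorem IsLeftOrderable.of_normal {G : Type*} [Group G] (N : Subgroup G) [N.Normal]
    (hN : IsLeftOrderable N) (hQ : IsLeftOrderable (G ⧸ N)) : IsLeftOrderable G := by
  classical
  obtain ⟨rN, hrN⟩ := hN
  obtain ⟨rQ, hrQ⟩ := hQ
  letI := rN; letI := rQ
  -- the strict order
  set R : G → G → Prop := fun a b =>
    ((a : G ⧸ N) < (b : G ⧸ N)) ∨ ∃ h : a⁻¹ * b ∈ N, (1 : N) < ⟨a⁻¹ * b, h⟩ with hR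
  have mem_eq : ∀ {a b : G}, a⁻¹ * b ∈ N → (a : G ⧸ N) = (b : G ⧸ N) := fun h =>
    QuotientGroup.eq.mpr h
  have irr : ∀ a, ¬ R a a := by
    rintro a (h | ⟨h, hlt⟩)
    · exact lt_irrefl _ h
    · have he : (⟨a⁻¹ * a, h⟩ : N) = 1 := by ext; simp
      rw [he] at hlt
      exact lt_irrefl _ hlt
  have htrans : ∀ a b c, R a b → R b c → R a c := by
    rintro a b c (h1 | ⟨m1, l1⟩) (h2 | ⟨m2, l2⟩)
    · exact Or.inl (h1.trans h2)
    · exact Or.inl (lt_of_lt_of_eq h1 (mem_eq m2))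
    · exact Or.inl (lt_of_eq_of_lt (mem_eq m1) h2)
    · have m3 : a⁻¹ * c ∈ N := by
        have : a⁻¹ * c = (a⁻¹ * b) * (b⁻¹ * c) := by group
        rw [this]; exact mul_mem m1 m2
      refine Or.inr ⟨m3, ?_⟩
      have key : (⟨a⁻¹ * c, m3⟩ : N) = ⟨a⁻¹ * b, m1⟩ * ⟨b⁻¹ * c, m2⟩ := by
        ext; simp
      rw [key]
      calc (1 : N) < ⟨a⁻¹ * b, m1⟩ := l1
        _ = ⟨a⁻¹ * b, m1⟩ * 1 := (mul_one _).symm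
        _ < ⟨a⁻¹ * b, m1⟩ * ⟨b⁻¹ * c, m2⟩ := lt_left_invariant hrN _ _ _ l2
  have tot : ∀ a b, R a b ∨ a = b ∨ R b a := by
    intro a b
    rcases lt_trichotomy (a : G ⧸ N) (b : G ⧸ N) with h | h | h
    · exact Or.inl (Or.inl h)
    · have m : a⁻¹ * b ∈ N := QuotientGroup.eq.mp h
      rcases lt_trichotomy (1 : N) ⟨a⁻¹ * b, m⟩ with h1 | h1 | h1
      · exact Or.inl (Or.inr ⟨m, h1⟩)
      · refine Or.inr (Or.inl ?_)
        have : (1 : G) = a⁻¹ * b := congrArg (Subtype.val) h1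
        exact (inv_mul_eq_one.mp this.symm)
      · refine Or.inr (Or.inr ?_)
        have m' : b⁻¹ * a ∈ N := by
          have : b⁻¹ * a = (a⁻¹ * b)⁻¹ := by group
          rw [this]; exact inv_mem m
        refine Or.inr ⟨m', ?_⟩
        have key : (⟨b⁻¹ * a, m'⟩ : N) = (⟨a⁻¹ * b, m⟩ : N)⁻¹ := by
          ext; simp
        rw [key]
        have hle : (1 : N) ≤ (⟨a⁻¹ * b, m⟩ : N)⁻¹ := by
          have := hrN (⟨a⁻¹ * b, m⟩ : N)⁻¹ _ _ h1.le
          rwa [inv_mul_cancel, mul_one] at this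
        refine lt_of_le_of_ne hle fun he => ?_
        have hx1 : (⟨a⁻¹ * b, m⟩ : N) = 1 := by
          rw [← inv_inv (⟨a⁻¹ * b, m⟩ : N), ← he, inv_one]
        rw [hx1] at h1
        exact lt_irrefl _ h1
    · exact Or.inr (Or.inr (Or.inl h))
  letI : IsTrans G R := ⟨htrans⟩
  letI : IsIrrefl G R := ⟨irr⟩
  letI : IsTrichotomous G R := ⟨fun a b h1 h2 => ((tot a b).resolve_left h1).resolve_right h2⟩
  letI : IsStrictTotalOrder G R := {}
  letI : DecidableRel R := Classical.decRel _
  refine ⟨linearOrderOfSTO R, fun a b c hle => ?_⟩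
  have hle' : b = c ∨ R b c := hle
  show a * b = a * c ∨ R (a * b) (a * c)
  rcases hle' with rfl | hbc
  · exact Or.inl rfl
  · refine Or.inr ?_
    rcases hbc with h | ⟨m, l⟩
    · refine Or.inl ?_
      have : ((a * b : G) : G ⧸ N) = (a : G ⧸ N) * b ∧ ((a * c : G) : G ⧸ N) = (a : G ⧸ N) * c :=
        ⟨rfl, rfl⟩
      rw [this.1, this.2]
      exact lt_left_invariant hrQ _ _ _ h
    · have he : (a * b)⁻¹ * (a * c) = b⁻¹ * c := by group
      exact Or.inr ⟨by rw [he]; exact m, by convert l using 2⟩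

/-- The abelianization of a free group is left-orderable (it is a free abelian
group, which embeds in a lexicographic product of copies of `ℤ`). -/
theorem isLeftOrderable_abelianization_of_isFreeGroup (H : Type*) [Group H] [IsFreeGroup H] :
    IsLeftOrderable (Abelianization H) := by
  classical
  letI : LinearOrder (IsFreeGroup.Generators H) :=
    linearOrderOfSTO WellOrderingRel
  set Y := IsFreeGroup.Generators H
  -- Abelianization H ≃* Abelianization (FreeGroup Y)
  let e : Abelianization H ≃* Abelianization (FreeGroup Y) :=
    MulEquiv.abelianizationCongr (IsFreeGroup.toFreeGroup H)
  -- Abelianization (FreeGroup Y) is (by definition) Multiplicative of FreeAbelianGroup Y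
  let g : Abelianization (FreeGroup Y) → Lex (Y →₀ ℤ) := fun x =>
    toLex (FreeAbelianGroup.toFinsupp (Additive.ofMul x : FreeAbelianGroup Y))
  have hg_inj : Function.Injective g := by
    intro x y hxy
    have := (FreeAbelianGroup.equivFinsupp Y).injective
      (a₁ := Additive.ofMul x) (a₂ := Additive.ofMul y) hxy
    exact this
  have hg_mul : ∀ a b : Abelianization (FreeGroup Y), g (a * b) = g a + g b := by
    intro a b
    show toLex (FreeAbelianGroup.toFinsupp _) = _
    have : (Additive.ofMul (a * b) : FreeAbelianGroup Y)
        = Additive.ofMul a + Additive.ofMul b := rfl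
    rw [this]
    exact congrArg toLex (map_add FreeAbelianGroup.toFinsupp (Additive.ofMul a : FreeAbelianGroup Y) (Additive.ofMul b : FreeAbelianGroup Y))
  refine isLeftOrderable_of_mulAdd (A := Lex (Y →₀ ℤ))
    (fun a b c h => add_le_add_right h a) (fun x => g (e x))
    (hg_inj.comp e.injective) (fun a b => by
      show g (e (a * b)) = g (e a) + g (e b)
      rw [map_mul, hg_mul])

theorem isLeftOrderable_of_subsingleton {G : Type*} [Group G] [Subsingleton G] :
    IsLeftOrderable G := by
  refine ⟨LinearOrder.lift' (fun _ => (0 : ℕ)) (Function.injective_of_subsingleton _),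
    fun a b c h => ?_⟩
  show (0 : ℕ) ≤ 0
  exact le_refl _

/-- For a free group `F` and `n ≥ 0`, the quotient `F/F⁽ⁿ⁾` by the
`n`-th term of the derived series is left-orderable: it carries a linear order invariant
under left multiplication. -/
theorem freeGroup_solvable_quotient_leftOrderable {X : Type*} (n : ℕ) :
    ∃ r : LinearOrder (FreeGroup X ⧸ derivedSeries (FreeGroup X) n),
      ∀ a b c : FreeGroup X ⧸ derivedSeries (FreeGroup X) n,
        r.le b c → r.le (a * b) (a * c) := by
  suffices h : IsLeftOrderable (FreeGroup X ⧸ derivedSeries (FreeGroup X) n) from h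
  induction n with
  | zero =>
    haveI : Subsingleton (FreeGroup X ⧸ derivedSeries (FreeGroup X) 0) :=
      QuotientGroup.subsingleton_quotient_top
    exact isLeftOrderable_of_subsingleton
  | succ n ih =>
    set G := FreeGroup X
    set H := derivedSeries G n with hH
    set K := derivedSeries G (n + 1) with hK
    have hKH : K ≤ H := by
      rw [hK, derivedSeries_succ]
      exact Subgroup.commutator_le_left H H
    -- the image of H in G ⧸ K
    set N : Subgroup (G ⧸ K) := H.map (QuotientGroup.mk' K) with hN
    haveI : N.Normal :=
      Subgroup.Normal.map (derivedSeries_normal G n) _ (QuotientGroup.mk'_surjective K)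
    refine IsLeftOrderable.of_normal N ?_ ?_
    · -- N is isomorphic to H ⧸ (K.subgroupOf H) = Abelianization H
      have hker : ((QuotientGroup.mk' K).domRestrict H).ker = K.subgroupOf H := by
        ext x
        simp [MonoidHom.mem_ker, Subgroup.mem_subgroupOf, QuotientGroup.eq_one_iff]
      have hrange : ((QuotientGroup.mk' K).domRestrict H).range = N := by
        rw [hN, MonoidHom.domRestrict_range]
      have hsub : K.subgroupOf H = commutator H := by
        have h1 : (commutator H).map H.subtype = K := by
          rw [commutator_def, Subgroup.map_commutator, ← MonoidHom.range_eq_map,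
            Subgroup.range_subtype, hK, derivedSeries_succ, hH]
        rw [← h1, Subgroup.subgroupOf, Subgroup.comap_map_eq_self_of_injective
          H.subtype_injective]
      have hkc : ((QuotientGroup.mk' K).domRestrict H).ker = commutator (H : Subgroup G) := hker.trans hsub
      let e0 : (H ⧸ ((QuotientGroup.mk' K).domRestrict H).ker) ≃* (H ⧸ commutator (H : Subgroup G)) :=
        QuotientGroup.quotientMulEquivOfEq hkc
      let e1 : (H ⧸ ((QuotientGroup.mk' K).domRestrict H).ker) ≃*
          ((QuotientGroup.mk' K).domRestrict H).range :=
        QuotientGroup.quotientKerEquivRange _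
      let e2 : N ≃* ((QuotientGroup.mk' K).domRestrict H).range :=
        MulEquiv.subgroupCongr hrange.symm
      have habel : IsLeftOrderable (H ⧸ commutator (H : Subgroup G)) :=
        isLeftOrderable_abelianization_of_isFreeGroup H
      exact IsLeftOrderable.of_injective ((e2.trans e1.symm).trans e0).toMonoidHom
        ((e2.trans e1.symm).trans e0).injective habel
    · -- (G ⧸ K) ⧸ N ≃ G ⧸ H is left-orderable by induction
      have e2 : ((G ⧸ K) ⧸ N) ≃* G ⧸ H :=
        QuotientGroup.quotientQuotientEquivQuotient K H hKH
      exact IsLeftOrderable.of_injective e2.toMonoidHom e2.injective ih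
end
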